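/- Fix a real k > −1 and let F_k(r) := r·J_k(r)/J_{k+1}(r). If 0 < a < b and J_{k+1}(r) ≠ 0 for every r in the closed interval [a, b], then F_k(b) < F_k(a); that is, F_k is strictly decreasing on every interval on which J_{k+1} does not vanish. -/

import Mathlib

open Real

/-- Bessel function of the first kind of real order `k`, defined by its power series
(valid for `r > 0`, using real powers). -/
noncomputable def besselJ (k r : ℝ) : ℝ :=
  ∑' m : ℕ, ((-1 : ℝ) ^ m / (m.factorial * Real.Gamma (m + k + 1))) * (r / 2) ^ ((2 * m : ℝ) + k)

/-!
Write `J_k(r) = (r/2)^k G_k((r/2)^2)` with the entire function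
`G_k(x) = ∑ (-1)^m x^m / (m! Γ(m+k+1))`, so that `F_k(r) = 2 G_k(x) / G_{k+1}(x)` at `x = (r/2)^2`.
Since `G_k' = -G_{k+1}` and `G_k = (k+1) G_{k+1} - x G_{k+2}`, we get
`x (G_k / G_{k+1})' = -V_k / G_{k+1}^2` with `V_k = G_k^2 - (k+1) G_k G_{k+1} + x G_{k+1}^2`.
Now `(x^{k+1} V_k)' = x^{k+1} G_{k+1}^2 ≥ 0`, strictly near `0` where `G_{k+1}(0) = 1/Γ(k+2) > 0`,
and `x^{k+1} V_k` vanishes at `0` because `k + 1 > 0`; so `V_k > 0` on `(0, ∞)`.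
-/

open Set Filter Topology

theorem lt_of_hasDerivAt_nonneg_of_eventually_pos {f f' : ℝ → ℝ} {a b : ℝ} (hab : a < b)
    (hf : ContinuousOn f (Icc a b)) (hderiv : ∀ t ∈ Ioo a b, HasDerivAt f (f' t) t)
    (hnonneg : ∀ t ∈ Ioo a b, 0 ≤ f' t) (hpos : ∀ᶠ t in 𝓝[>] a, 0 < f' t) : f a < f b := by
  obtain ⟨c, hac, hc⟩ := mem_nhdsGT_iff_exists_Ioo_subset.mp hpos
  have hae : a < min c b := lt_min hac hab
  have heb : min c b ≤ b := min_le_right c b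
  have hstrict : StrictMonoOn f (Icc a (min c b)) :=
    strictMonoOn_of_hasDerivWithinAt_pos (convex_Icc _ _) (hf.mono (Icc_subset_Icc_right heb))
      (fun t ht => (hderiv t (Ioo_subset_Ioo_right heb (by simpa using ht))).hasDerivWithinAt)
      (fun t ht => hc (Ioo_subset_Ioo_right (min_le_left c b) (by simpa using ht)))
  have hmono : MonotoneOn f (Icc a b) :=
    monotoneOn_of_hasDerivWithinAt_nonneg (convex_Icc _ _) hf
      (fun t ht => (hderiv t (by simpa using ht)).hasDerivWithinAt)
      (fun t ht => hnonneg t (by simpa using ht))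
  calc f a < f (min c b) := hstrict (left_mem_Icc.2 hae.le) (right_mem_Icc.2 hae.le) hae
    _ ≤ f b := hmono ⟨hae.le, heb⟩ (right_mem_Icc.2 hab.le) heb

theorem hasDerivAt_tsum_mul_pow {c : ℕ → ℝ} (hc : ∀ x, Summable fun m => ‖c m * x ^ m‖)
    (x : ℝ) : HasDerivAt (fun y => ∑' m, c m * y ^ m) (∑' m, c (m + 1) * (m + 1) * x ^ m) x := by
  set R := |x| + 1
  have hR : 1 ≤ R := by simp [R]
  have hx : x ∈ Ioo (-R) R := abs_lt.mp (by simp [R])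
  have hbound : ∀ m, ∀ y ∈ Ioo (-R) R, ‖c m * (m * y ^ (m - 1))‖ ≤ ‖c m * (2 * R) ^ m‖ := by
    intro m y hy
    have hy : |y| ≤ R := (abs_lt.mpr hy).le
    have hm : (m : ℝ) ≤ 2 ^ m := by exact_mod_cast Nat.lt_two_pow_self.le
    simp only [norm_mul, norm_pow, Real.norm_eq_abs, Nat.abs_cast, abs_two,
      abs_of_pos (by linarith : 0 < R), mul_pow]
    gcongr |c m| * ?_
    calc (m : ℝ) * |y| ^ (m - 1) ≤ 2 ^ m * R ^ (m - 1) := by gcongr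
      _ ≤ 2 ^ m * R ^ m := by gcongr; exact Nat.sub_le m 1
  have hderiv := hasDerivAt_tsum_of_isPreconnected (hc (2 * R)) isOpen_Ioo isPreconnected_Ioo
    (fun m y _ => (hasDerivAt_pow m y).const_mul (c m)) hbound (y₀ := 0)
    (by simp; linarith) (hc 0).of_norm hx
  refine hderiv.congr_deriv ?_
  rw [(Summable.of_norm_bounded (hc (2 * R)) (hbound · x hx)).tsum_eq_zero_add]
  simp [mul_comm, mul_left_comm]

noncomputable def besselCoeff (k : ℝ) (m : ℕ) : ℝ :=
  (-1) ^ m / (m.factorial * Gamma (m + k + 1))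

noncomputable def besselSeries (k x : ℝ) : ℝ :=
  ∑' m, besselCoeff k m * x ^ m

theorem besselCoeff_succ_mul (k : ℝ) (m : ℕ) :
    besselCoeff k (m + 1) * (m + 1) = -besselCoeff (k + 1) m := by
  have hm : (m : ℝ) + 1 ≠ 0 := by positivity
  simp only [besselCoeff, Nat.factorial_succ, Nat.cast_mul, Nat.cast_succ, pow_succ]
  rw [show (m : ℝ) + 1 + k + 1 = m + (k + 1) + 1 by ring]
  field_simp

theorem besselCoeff_eq_mul (k : ℝ) (m : ℕ) :
    besselCoeff k m = (m + k + 1) * besselCoeff (k + 1) m := by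
  by_cases h : (m : ℝ) + k + 1 = 0
  · simp [besselCoeff, h]
  · rw [besselCoeff, besselCoeff, show (m : ℝ) + (k + 1) + 1 = m + k + 1 + 1 by ring,
      Gamma_add_one h]
    field_simp

theorem summable_norm_besselCoeff_mul_pow (k x : ℝ) :
    Summable fun m => ‖besselCoeff k m * x ^ m‖ := by
  refine summable_of_ratio_norm_eventually_le (r := 1 / 2) (by norm_num) ?_
  filter_upwards [eventually_ge_atTop ⌈2 * |x| + |k|⌉₊] with m hm
  have hm : 2 * |x| + |k| ≤ m := Nat.ceil_le.mp hm
  have hk : 2 * |x| + 1 ≤ m + k + 1 := by linarith [neg_abs_le k]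
  -- `c m = -(m + 1) (m + k + 1) c (m + 1)`, and `(m + 1) (m + k + 1)` eventually exceeds `2 |x|`
  have hcoeff : |besselCoeff k m| = (m + 1) * (m + k + 1) * |besselCoeff k (m + 1)| := by
    rw [besselCoeff_eq_mul, ← neg_neg (besselCoeff (k + 1) m), ← besselCoeff_succ_mul, abs_mul,
      abs_of_pos (by linarith [abs_nonneg x]), abs_neg, abs_mul,
      abs_of_pos (by positivity : (0 : ℝ) < m + 1)]
    ring
  rw [norm_norm, norm_norm]
  simp only [norm_mul, norm_pow, Real.norm_eq_abs, hcoeff, pow_succ]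
  have hx : |x| ≤ (m + 1) * (m + k + 1) / 2 := by nlinarith [abs_nonneg x]
  calc |besselCoeff k (m + 1)| * (|x| ^ m * |x|)
      ≤ |besselCoeff k (m + 1)| * (|x| ^ m * ((m + 1) * (m + k + 1) / 2)) := by gcongr
    _ = 1 / 2 * ((m + 1) * (m + k + 1) * |besselCoeff k (m + 1)| * |x| ^ m) := by ring

theorem hasDerivAt_besselSeries (k x : ℝ) :
    HasDerivAt (besselSeries k) (-besselSeries (k + 1) x) x := by
  refine (hasDerivAt_tsum_mul_pow (summable_norm_besselCoeff_mul_pow k) x).congr_deriv ?_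
  simp only [besselSeries, ← tsum_neg, besselCoeff_succ_mul, neg_mul]

@[fun_prop]
theorem continuous_besselSeries (k : ℝ) : Continuous (besselSeries k) :=
  continuous_iff_continuousAt.mpr fun x => (hasDerivAt_besselSeries k x).continuousAt

theorem besselSeries_zero (k : ℝ) : besselSeries k 0 = (Gamma (k + 1))⁻¹ := by
  rw [besselSeries, tsum_eq_single 0 fun m hm => by simp [zero_pow hm]]
  simp [besselCoeff]

theorem besselSeries_sub_mul (k x : ℝ) :
    besselSeries k x - (k + 1) * besselSeries (k + 1) x = -x * besselSeries (k + 2) x := by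
  have h0 := (summable_norm_besselCoeff_mul_pow k x).of_norm
  have h1 := ((summable_norm_besselCoeff_mul_pow (k + 1) x).of_norm.mul_left (k + 1))
  have hterm (m : ℕ) : besselCoeff k (m + 1) * x ^ (m + 1)
      - (k + 1) * (besselCoeff (k + 1) (m + 1) * x ^ (m + 1))
      = -x * (besselCoeff (k + 2) m * x ^ m) := by
    have h := besselCoeff_succ_mul (k + 1) m
    rw [show k + 1 + 1 = k + 2 by ring] at h
    rw [besselCoeff_eq_mul k, Nat.cast_succ]
    linear_combination x ^ (m + 1) * h
  rw [besselSeries, besselSeries, besselSeries, ← tsum_mul_left, ← tsum_mul_left,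
    ← h0.tsum_sub h1, (h0.sub h1).tsum_eq_zero_add]
  simp only [tsum_congr hterm, pow_zero, mul_one, besselCoeff_eq_mul k 0]
  simp

theorem besselJ_eq_rpow_mul_besselSeries (k : ℝ) {r : ℝ} (hr : 0 < r) :
    besselJ k r = (r / 2) ^ k * besselSeries k ((r / 2) ^ 2) := by
  rw [besselJ, besselSeries, ← tsum_mul_left]
  refine tsum_congr fun m => ?_
  rw [rpow_add (by positivity), show (2 * m : ℝ) = ((2 * m : ℕ) : ℝ) by push_cast; ring,
    rpow_natCast, pow_mul, besselCoeff]
  ring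

noncomputable def besselTuran (k x : ℝ) : ℝ :=
  besselSeries k x ^ 2 - (k + 1) * besselSeries k x * besselSeries (k + 1) x
    + x * besselSeries (k + 1) x ^ 2

theorem mul_sq_sub_mul_besselSeries (k x : ℝ) :
    x * (besselSeries (k + 1) x ^ 2 - besselSeries k x * besselSeries (k + 2) x)
      = besselTuran k x := by
  rw [besselTuran]
  linear_combination -besselSeries k x * besselSeries_sub_mul k x

theorem hasDerivAt_rpow_mul_besselTuran (k : ℝ) {x : ℝ} (hx : 0 < x) :
    HasDerivAt (fun t => t ^ (k + 1) * besselTuran k t)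
      (x ^ (k + 1) * besselSeries (k + 1) x ^ 2) x := by
  have h0 := hasDerivAt_besselSeries k x
  have h1 := hasDerivAt_besselSeries (k + 1) x
  rw [show k + 1 + 1 = k + 2 by ring] at h1
  have hV := ((h0.fun_pow 2).fun_sub ((h0.const_mul (k + 1)).fun_mul h1)).fun_add
    ((hasDerivAt_id' x).fun_mul (h1.fun_pow 2))
  have hpow := hasDerivAt_rpow_const (x := x) (p := k + 1) (Or.inl hx.ne')
  refine (hpow.mul hV).congr_deriv ?_
  rw [add_sub_cancel_right, rpow_add_one hx.ne']
  linear_combination x ^ k * ((k + 1) * besselSeries k x - 2 * x * besselSeries (k + 1) x)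
    * besselSeries_sub_mul k x

theorem besselTuran_pos {k : ℝ} (hk : -1 < k) {x : ℝ} (hx : 0 < x) : 0 < besselTuran k x := by
  have hk1 : 0 < k + 1 := by linarith
  have hG0 : 0 < besselSeries (k + 1) 0 := by
    rw [besselSeries_zero]; exact inv_pos.mpr (Gamma_pos_of_pos (by linarith))
  have hnear : ∀ᶠ t in 𝓝[>] 0, 0 < t ^ (k + 1) * besselSeries (k + 1) t ^ 2 := by
    filter_upwards [self_mem_nhdsWithin,
      nhdsWithin_le_nhds (continuousAt_const.eventually_lt
        (continuous_besselSeries (k + 1)).continuousAt hG0)] with t ht hGt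
    exact mul_pos (rpow_pos_of_pos ht _) (pow_pos hGt 2)
  have hU := lt_of_hasDerivAt_nonneg_of_eventually_pos
    (f := fun t => t ^ (k + 1) * besselTuran k t) hx
    ((continuous_rpow_const hk1.le).mul (by unfold besselTuran; fun_prop)).continuousOn
    (fun t ht => hasDerivAt_rpow_mul_besselTuran k ht.1)
    (fun t ht => mul_nonneg (rpow_nonneg ht.1.le _) (sq_nonneg _)) hnear
  rw [zero_rpow hk1.ne', zero_mul] at hU
  exact pos_of_mul_pos_right hU (rpow_nonneg hx.le _)

theorem besselSeries_mul_lt_sq {k : ℝ} (hk : -1 < k) {x : ℝ} (hx : 0 < x) :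
    besselSeries k x * besselSeries (k + 2) x < besselSeries (k + 1) x ^ 2 := by
  have h := mul_sq_sub_mul_besselSeries k x ▸ besselTuran_pos hk hx
  nlinarith [pos_of_mul_pos_right h hx.le]

theorem strictAntiOn_besselSeries_div {k : ℝ} (hk : -1 < k) {s : Set ℝ} (hs : s.OrdConnected)
    (hs0 : s ⊆ Ioi 0) (hG : ∀ x ∈ s, besselSeries (k + 1) x ≠ 0) :
    StrictAntiOn (fun x => besselSeries k x / besselSeries (k + 1) x) s := by
  have hderiv (x : ℝ) (hx : x ∈ s) := (hasDerivAt_besselSeries k x).div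
    (hasDerivAt_besselSeries (k + 1) x) (hG x hx)
  refine strictAntiOn_of_hasDerivWithinAt_neg hs.convex
    (fun x hx => (hderiv x hx).continuousAt.continuousWithinAt)
    (fun x hx => (hderiv x (interior_subset hx)).hasDerivWithinAt) fun x hx => ?_
  have hx' := interior_subset hx
  rw [show k + 1 + 1 = k + 2 by ring]
  have := besselSeries_mul_lt_sq hk (hs0 hx')
  exact div_neg_of_neg_of_pos (by linarith) (sq_pos_of_ne_zero (hG x hx'))

theorem besselJ_ratio_eq (k : ℝ) {r : ℝ} (hr : 0 < r) :
    r * besselJ k r / besselJ (k + 1) r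
      = 2 * (besselSeries k ((r / 2) ^ 2) / besselSeries (k + 1) ((r / 2) ^ 2)) := by
  have hr2 : 0 < r / 2 := half_pos hr
  set c := (r / 2) ^ k * (r / 2)
  have hc : c ≠ 0 := (mul_pos (rpow_pos_of_pos hr2 k) hr2).ne'
  rw [besselJ_eq_rpow_mul_besselSeries k hr, besselJ_eq_rpow_mul_besselSeries (k + 1) hr,
    rpow_add_one hr2.ne']
  calc _ = c * (2 * besselSeries k ((r / 2) ^ 2)) / (c * besselSeries (k + 1) ((r / 2) ^ 2)) := by
        congr 1; ring
    _ = _ := by rw [mul_div_mul_left _ _ hc, mul_div_assoc]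

/-- `F_k` is strictly decreasing on any interval on which `J_{k+1}` does not vanish. -/
theorem besselJ_ratio_strictAnti (k : ℝ) (hk : -1 < k) (a b : ℝ) (ha : 0 < a) (hab : a < b)
    (h : ∀ r ∈ Set.Icc a b, besselJ (k + 1) r ≠ 0) :
    b * besselJ k b / besselJ (k + 1) b < a * besselJ k a / besselJ (k + 1) a := by
  have hpos (r : ℝ) (hr : r ∈ Icc a b) : 0 < r := ha.trans_le hr.1
  have hsq : StrictMonoOn (fun r : ℝ => (r / 2) ^ 2) (Icc a b) := fun r hr t _ hrt => by
    have := hpos r hr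
    dsimp only
    gcongr
  have hG : ∀ x ∈ (fun r : ℝ => (r / 2) ^ 2) '' Icc a b, besselSeries (k + 1) x ≠ 0 := by
    rintro _ ⟨r, hr, rfl⟩ hzero
    exact h r hr (by rw [besselJ_eq_rpow_mul_besselSeries _ (hpos r hr), hzero, mul_zero])
  have hanti := strictAntiOn_besselSeries_div hk
    (isPreconnected_Icc.image _ (by fun_prop)).ordConnected
    (by rintro _ ⟨r, hr, rfl⟩; exact pow_pos (half_pos (hpos r hr)) 2) hG
  have hlt := hanti.comp_strictMonoOn hsq (mapsTo_image _ _) (left_mem_Icc.2 hab.le)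
    (right_mem_Icc.2 hab.le) hab
  rw [besselJ_ratio_eq k ha, besselJ_ratio_eq k (ha.trans hab)]
  simp only [Function.comp_apply] at hlt
  linarith
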